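/- arXiv:2508.15628 — 5 statements merged into one kernel-verified Lean document; each statement's English description precedes it below -/
import Mathlib

section
/- For every natural number n ≥ 1, the product ε₁·ε₂·⋯·ε_{2n+1} equals −ε_n. -/
/-- The set `I = {2n ∈ ℕ : n > 1 and ∃ m, 2^m ≤ n < 2^m + 2^(m-1)}`. -/
def Iset : Set ℕ :=
  {N | ∃ n : ℕ, N = 2 * n ∧ 1 < n ∧ ∃ m : ℕ, 2 ^ m ≤ n ∧ n < 2 ^ m + 2 ^ (m - 1)}

open Classical in
/-- The sequence `ε : ℕ → ℤ` with values in `{1, -1}`: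
`ε (2n-1) = -1` if `2n ∈ I`, `ε (2n-1) = 1` if `2n ∉ I`, and `ε (2n) = 1` for all `n`. -/
noncomputable def eps (i : ℕ) : ℤ :=
  if Odd i ∧ (i + 1) ∈ Iset then -1 else 1

/-- Auxiliary predicate: `Q k` iff `2k ∈ Iset`. -/
def Q (k : ℕ) : Prop := 1 < k ∧ ∃ m : ℕ, 2 ^ m ≤ k ∧ k < 2 ^ m + 2 ^ (m - 1)

lemma mem_Iset_iff (k : ℕ) : (2 * k) ∈ Iset ↔ Q k := by
  constructor
  · rintro ⟨n, hn, h⟩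
    have : n = k := by omega
    subst this; exact h
  · intro h; exact ⟨k, rfl, h⟩

lemma eps_even (k : ℕ) : eps (2 * k) = 1 := by
  simp [eps, Nat.odd_iff, Nat.mul_mod_right]

open Classical in
lemma eps_odd (k : ℕ) : eps (2 * k + 1) = if Q (k + 1) then -1 else 1 := by
  have h1 : Odd (2 * k + 1) := ⟨k, by omega⟩
  have h2 : (2 * k + 1 + 1) ∈ Iset ↔ Q (k + 1) := by
    rw [show 2 * k + 1 + 1 = 2 * (k + 1) by ring]; exact mem_Iset_iff _
  by_cases h : Q (k + 1)
  · rw [if_pos h]; unfold eps; rw [if_pos ⟨h1, h2.mpr h⟩]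
  · rw [if_neg h]; unfold eps; rw [if_neg (fun hc => h (h2.mp hc.2))]

lemma Q_double {j : ℕ} (hj : 2 ≤ j) : Q (2 * j) ↔ Q j := by
  constructor
  · rintro ⟨-, m, h1, h2⟩
    have hm : 2 ≤ m := by
      by_contra h
      interval_cases m <;> simp at h1 h2 <;> omega
    obtain ⟨m', rfl⟩ : ∃ m', m = m' + 2 := ⟨m - 2, by omega⟩
    have hp : 1 ≤ 2 ^ m' := Nat.one_le_two_pow
    rw [show m' + 2 - 1 = m' + 1 by omega] at h2
    simp only [pow_succ] at h1 h2
    refine ⟨by omega, m' + 1, ?_, ?_⟩ <;>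
      simp only [pow_succ, Nat.add_sub_cancel] <;> omega
  · rintro ⟨hj1, m, h1, h2⟩
    have hm : 1 ≤ m := by
      by_contra h
      interval_cases m
      simp at h1 h2; omega
    obtain ⟨m', rfl⟩ : ∃ m', m = m' + 1 := ⟨m - 1, by omega⟩
    have hp : 1 ≤ 2 ^ m' := Nat.one_le_two_pow
    rw [Nat.add_sub_cancel] at h2
    refine ⟨by omega, m' + 2, ?_, ?_⟩ <;>
      simp only [show m' + 2 - 1 = m' + 1 from by omega, pow_succ] at h1 h2 ⊢ <;> omega

lemma Q_double' {j : ℕ} (hj : 1 ≤ j) : Q (2 * j + 1) ↔ Q j := by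
  constructor
  · rintro ⟨-, m, h1, h2⟩
    have hp0 : 1 ≤ 2 ^ m := Nat.one_le_two_pow
    have hm : 2 ≤ m := by
      by_contra h
      interval_cases m <;> simp at h1 h2 <;> omega
    obtain ⟨m', rfl⟩ : ∃ m', m = m' + 2 := ⟨m - 2, by omega⟩
    have hp : 1 ≤ 2 ^ m' := Nat.one_le_two_pow
    rw [show m' + 2 - 1 = m' + 1 by omega] at h2
    simp only [pow_succ] at h1 h2
    refine ⟨by omega, m' + 1, ?_, ?_⟩ <;>
      simp only [pow_succ, Nat.add_sub_cancel] <;> omega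
  · rintro ⟨hj1, m, h1, h2⟩
    have hm : 1 ≤ m := by
      by_contra h
      interval_cases m
      simp at h1 h2; omega
    obtain ⟨m', rfl⟩ : ∃ m', m = m' + 1 := ⟨m - 1, by omega⟩
    have hp : 1 ≤ 2 ^ m' := Nat.one_le_two_pow
    rw [Nat.add_sub_cancel] at h2
    refine ⟨by omega, m' + 2, ?_, ?_⟩ <;>
      simp only [show m' + 2 - 1 = m' + 1 from by omega, pow_succ] at h1 h2 ⊢ <;> omega

lemma Q_two : Q 2 := ⟨by norm_num, 1, by norm_num⟩

lemma not_Q_one : ¬ Q 1 := fun ⟨h, _⟩ => by omega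

/-- for every `n ≥ 1`, `ε 1 * ε 2 * ⋯ * ε (2n+1) = -ε n`. -/
theorem stmt3 (n : ℕ) (hn : 1 ≤ n) :
    (∏ i ∈ Finset.Icc 1 (2 * n + 1), eps i) = -eps n := by
  classical
  induction n, hn using Nat.le_induction with
  | base =>
    have e1 : eps 1 = 1 := by
      have := eps_odd 0
      rw [if_neg not_Q_one] at this
      simpa using this
    have e2 : eps 2 = 1 := eps_even 1
    have e3 : eps 3 = -1 := by
      have := eps_odd 1
      rw [if_pos Q_two] at this
      simpa using this
    have h3 : Finset.Icc 1 3 = {1, 2, 3} := by decide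
    rw [show 2 * 1 + 1 = 3 by norm_num, h3]
    simp [Finset.prod_insert, e1, e2, e3]
  | succ n hn ih =>
    rw [show 2 * (n + 1) + 1 = (2 * n + 2) + 1 by ring,
        Finset.prod_Icc_succ_top (by omega),
        show 2 * n + 2 = (2 * n + 1) + 1 by ring,
        Finset.prod_Icc_succ_top (by omega), ih,
        show 2 * n + 1 + 1 = 2 * (n + 1) by ring, eps_even, eps_odd]
    rcases Nat.even_or_odd n with ⟨j, hj⟩ | ⟨j, hj⟩
    · have hn' : n = 2 * j := by omega
      subst hn'
      have hQ : Q (2 * j + 1 + 1) ↔ Q (j + 1) := by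
        rw [show 2 * j + 1 + 1 = 2 * (j + 1) by ring]
        exact Q_double (by omega)
      rw [eps_even, show 2 * j + 1 = 2 * j + 1 from rfl]
      have eo : eps (2 * j + 1) = if Q (j + 1) then -1 else 1 := eps_odd j
      rw [eo]
      by_cases h : Q (j + 1)
      · rw [if_pos (hQ.mpr h), if_pos h]; ring
      · rw [if_neg (fun hh => h (hQ.mp hh)), if_neg h]; ring
    · have hn' : n = 2 * j + 1 := by omega
      subst hn'
      have hQ : Q (2 * j + 1 + 1 + 1) ↔ Q (j + 1) := by
        rw [show 2 * j + 1 + 1 + 1 = 2 * (j + 1) + 1 by ring]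
        exact Q_double' (by omega)
      have e2 : eps (2 * j + 1 + 1) = 1 := by
        rw [show 2 * j + 1 + 1 = 2 * (j + 1) by ring]; exact eps_even _
      rw [eps_odd, e2]
      by_cases h : Q (j + 1)
      · rw [if_pos h, if_pos (hQ.mpr h)]; ring
      · rw [if_neg h, if_neg (fun hh => h (hQ.mp hh))]; ring
end

section
/- Let φ : E → E be the F-algebra endomorphism determined by φ(e_i) = ε_i·e_i + w_i for all i ≥ 1. If v ∈ L (the F-span of the generators e₁, e₂, …) satisfies φ(v) = v or φ(v) = −v, then v = 0. In particular φ is an automorphism of type 4: no basis of L contains an eigenvector of φ. -/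
/-- `E F` is the Grassmann (exterior) algebra of the infinite-dimensional `F`-vector
space which is free on the index set `{n : ℕ // 1 ≤ n}` of the generators `e₁, e₂, …`. -/
noncomputable abbrev E (F : Type) [Field F] :=
  ExteriorAlgebra F ({n : ℕ // 1 ≤ n} →₀ F)

/-- The generators `e i` (for `i ≥ 1`) of the Grassmann algebra; junk value `0` at `i = 0`. -/
noncomputable def e (F : Type) [Field F] (i : ℕ) : E F :=
  if h : 1 ≤ i then ExteriorAlgebra.ι F (Finsupp.single ⟨i, h⟩ 1) else 0

/-- `w n = e 1 * e 2 * ⋯ * e (2n+1)`. -/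
noncomputable def w (F : Type) [Field F] (n : ℕ) : E F :=
  ((List.range' 1 (2 * n + 1)).map (e F)).prod

/-- `L` is the `F`-span of the generators `e 1, e 2, …` inside `E`. -/
noncomputable def Lsub (F : Type) [Field F] : Submodule F (E F) :=
  Submodule.span F {x : E F | ∃ i : ℕ, 1 ≤ i ∧ x = e F i}

/-- Coordinate map picking out the coordinates at indices `1, …, k`. -/
noncomputable def coordMap (F : Type) [Field F] (k : ℕ) :
    ({n : ℕ // 1 ≤ n} →₀ F) →ₗ[F] (Fin k → F) :=
  LinearMap.pi (fun j => Finsupp.lapply ⟨(j : ℕ) + 1, Nat.le_add_left 1 j⟩)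

/-- Alternating map: determinant of coordinates at indices `1, …, k`. -/
noncomputable def altA (F : Type) [Field F] (k : ℕ) :
    ({n : ℕ // 1 ≤ n} →₀ F) [⋀^Fin k]→ₗ[F] F :=
  (Matrix.detRowAlternating).compLinearMap (coordMap F k)

/-- The degree-`k`-selecting functional. -/
noncomputable def Gfun (F : Type) [Field F] (k : ℕ) : E F →ₗ[F] F :=
  ExteriorAlgebra.liftAlternating (fun i => if i = k then altA F i else 0)

lemma G_e (F : Type) [Field F] (k i : ℕ) (hi : 1 ≤ i) (hk : k ≠ 1) :
    Gfun F k (e F i) = 0 := by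
  rw [e, dif_pos hi, Gfun, ExteriorAlgebra.liftAlternating_ι, if_neg (by omega)]
  simp

lemma w_eq (F : Type) [Field F] (n : ℕ) :
    w F n = ExteriorAlgebra.ιMulti F (2 * n + 1)
      (fun j : Fin (2 * n + 1) => Finsupp.single ⟨(j : ℕ) + 1, Nat.le_add_left 1 j⟩ 1) := by
  rw [ExteriorAlgebra.ιMulti_apply, w]
  congr 1
  apply List.ext_getElem
  · simp
  intro i h1 h2
  simp only [List.getElem_map, List.getElem_range', List.getElem_ofFn]
  rw [e, dif_pos (by omega)]
  congr 2
  exact Subtype.ext (by simp only [Fin.val_mk]; omega)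

lemma G_w (F : Type) [Field F] (k n : ℕ) :
    Gfun F k (w F n) = if k = 2 * n + 1 then 1 else 0 := by
  rw [w_eq, Gfun, ExteriorAlgebra.liftAlternating_apply_ιMulti]
  by_cases h : k = 2 * n + 1
  · rw [if_pos h, if_pos h.symm]
    rw [altA, AlternatingMap.compLinearMap_apply]
    have : (fun j : Fin (2 * n + 1) =>
        coordMap F (2 * n + 1) (Finsupp.single ⟨(j : ℕ) + 1, Nat.le_add_left 1 j⟩ (1 : F))) =
        (1 : Matrix (Fin (2 * n + 1)) (Fin (2 * n + 1)) F) := by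
      funext a b
      simp only [coordMap, LinearMap.pi_apply, Finsupp.lapply_apply,
        Finsupp.single_apply, Matrix.one_apply, Subtype.mk.injEq]
      by_cases hab : a = b
      · subst hab; simp
      · rw [if_neg (by simpa [Fin.val_inj] using hab), if_neg hab]
    rw [this]
    exact Matrix.det_one
  · rw [if_neg h, if_neg (fun hh => h hh.symm)]
    simp

/-- if `φ : E → E` is the `F`-algebra endomorphism determined by
`φ (e i) = ε i • e i + w i` for all `i ≥ 1`, then every `v ∈ L` with `φ v = v` or
`φ v = -v` is zero; in particular `φ` is of type 4: no basis of `L` contains an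
eigenvector of `φ`. -/
theorem stmt7 (F : Type) [Field F] (hchar : (2 : F) ≠ 0)
    (φ : E F →ₐ[F] E F) (hφ : ∀ i : ℕ, 1 ≤ i → φ (e F i) = eps i • e F i + w F i) :
    (∀ v : E F, v ∈ Lsub F → (φ v = v ∨ φ v = -v) → v = 0) ∧
      (∀ (κ : Type) (γ : Module.Basis κ F (Lsub F)) (k : κ),
        φ (γ k : E F) ≠ (γ k : E F) ∧ φ (γ k : E F) ≠ -(γ k : E F)) := by
  have part1 : ∀ v : E F, v ∈ Lsub F → (φ v = v ∨ φ v = -v) → v = 0 := by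
    intro v hv heq
    have hset : {x : E F | ∃ i : ℕ, 1 ≤ i ∧ x = e F i} =
        Set.range (fun i : ℕ => e F (i + 1)) := by
      ext x
      constructor
      · rintro ⟨i, hi, rfl⟩
        exact ⟨i - 1, by simp only []; rw [Nat.sub_add_cancel hi]⟩
      · rintro ⟨i, rfl⟩
        exact ⟨i + 1, by omega, rfl⟩
    rw [Lsub, hset, Finsupp.mem_span_range_iff_exists_finsupp] at hv
    obtain ⟨c, rfl⟩ := hv
    have hGv : ∀ k : ℕ, k ≠ 1 →
        Gfun F k (c.sum fun i a => a • e F (i + 1)) = 0 := by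
      intro k hk
      rw [map_finsuppSum]
      apply Finset.sum_eq_zero
      intro i _
      simp only []
      rw [map_smul, G_e F k (i + 1) (by omega) hk, smul_zero]
    have hc : ∀ i0 : ℕ, c i0 = 0 := by
      intro i0
      set k := 2 * (i0 + 1) + 1 with hk
      have key : ∀ i (a : F), Gfun F k (φ (a • e F (i + 1))) = if i = i0 then a else 0 := by
        intro i a
        rw [map_smul, map_smul, hφ (i + 1) (by omega), map_add, map_zsmul,
          G_e F k (i + 1) (by omega) (by omega), G_w]
        by_cases h : i = i0
        · subst h
          rw [if_pos rfl, if_pos rfl]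
          simp
        · rw [if_neg (by omega), if_neg h]
          simp
      have h0 : Gfun F k (φ (c.sum fun i a => a • e F (i + 1))) = 0 := by
        rcases heq with h | h
        · rw [h, hGv k (by omega)]
        · rw [h, map_neg, hGv k (by omega), neg_zero]
      rw [map_finsuppSum, map_finsuppSum, Finsupp.sum] at h0
      rw [Finset.sum_congr rfl (fun i _ => key i (c i))] at h0
      rw [Finset.sum_ite_eq' c.support i0 (fun i => c i)] at h0
      by_cases hmem : i0 ∈ c.support
      · rwa [if_pos hmem] at h0
      · exact Finsupp.notMem_support_iff.mp hmem
    have : c = 0 := Finsupp.ext hc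
    simp [this]
  refine ⟨part1, fun κ γ k => ⟨fun h => ?_, fun h => ?_⟩⟩
  · exact Module.Basis.ne_zero γ k (Subtype.ext (part1 _ (γ k).2 (Or.inl h)))
  · exact Module.Basis.ne_zero γ k (Subtype.ext (part1 _ (γ k).2 (Or.inr h)))
end

section
/- There exists a unique F-algebra homomorphism φ : E → E with φ(e₁) = −e₁ and φ(e_n) = −e_n + 2·e₁·e_n for all n > 1; moreover φ∘φ = id on E, so φ is an F-algebra automorphism of E of order two. -/
section Aux

variable (F : Type) [Field F]

open ExteriorAlgebra

noncomputable def fmap : ({n : ℕ // 1 ≤ n} →₀ F) →ₗ[F] E F :=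
  -(ι F) + (2:F) • (LinearMap.mulLeft F (e F 1)).comp (ι F)

lemma fmap_apply (m : {n : ℕ // 1 ≤ n} →₀ F) :
    fmap F m = -(ι F m) + (2:F) • (e F 1 * ι F m) := by
  simp [fmap]

lemma e_eq (n : ℕ) (h : 1 ≤ n) : e F n = ι F (Finsupp.single ⟨n, h⟩ 1) := by
  simp [e, h]

lemma anticomm (a : E F) (m : {n : ℕ // 1 ≤ n} →₀ F) (ha : ∃ v, a = ι F v) :
    ι F m * a = -(a * ι F m) := by
  obtain ⟨v, rfl⟩ := ha
  have := ExteriorAlgebra.ι_sq_zero (R := F) (m + v)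
  rw [map_add, add_mul, mul_add, mul_add, ι_sq_zero, ι_sq_zero] at this
  simp only [zero_add, add_zero] at this
  exact eq_neg_of_add_eq_zero_left this

lemma fmap_sq (m : {n : ℕ // 1 ≤ n} →₀ F) : fmap F m * fmap F m = 0 := by
  rw [fmap_apply]
  set a := ι F m with ha'
  have hb : e F 1 = ι F (Finsupp.single ⟨1, le_refl 1⟩ 1) := e_eq F 1 le_rfl
  set b := e F 1 with hb'
  have ha : a * a = 0 := ι_sq_zero m
  have hbb : b * b = 0 := by rw [hb]; exact ι_sq_zero _
  have hab : a * b = -(b * a) := by rw [hb, ha']; exact anticomm F _ m ⟨_, rfl⟩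
  have h1 : a * (b * a) = 0 := by rw [← mul_assoc, hab, neg_mul, mul_assoc, ha, mul_zero, neg_zero]
  have h2 : (b * a) * a = 0 := by rw [mul_assoc, ha, mul_zero]
  have h3 : (b * a) * (b * a) = 0 := by rw [mul_assoc, h1, mul_zero]
  simp [mul_add, add_mul, mul_smul_comm, smul_mul_assoc, neg_mul, mul_neg, ha, h1, h2, h3]

noncomputable def phi : E F →ₐ[F] E F :=
  ExteriorAlgebra.lift F ⟨fmap F, fmap_sq F⟩

lemma phi_ι (m : {n : ℕ // 1 ≤ n} →₀ F) : phi F (ι F m) = fmap F m := by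
  unfold phi
  exact ExteriorAlgebra.lift_ι_apply F (fmap F) (fmap_sq F) m

lemma e1_sq : e F 1 * e F 1 = 0 := by
  rw [e_eq F 1 le_rfl]; exact ι_sq_zero _

lemma phi_e (n : ℕ) (h : 1 ≤ n) :
    phi F (e F n) = -e F n + (2:F) • (e F 1 * e F n) := by
  rw [e_eq F n h, phi_ι, fmap_apply, ← e_eq F n h]

lemma sat_phi : phi F (e F 1) = -e F 1 ∧
    ∀ n : ℕ, 1 < n → phi F (e F n) = -e F n + (2 : F) • (e F 1 * e F n) := by
  constructor
  · rw [phi_e F 1 le_rfl, e1_sq]; simp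
  · exact fun n hn => phi_e F n hn.le

lemma eq_fmap (ψ : E F →ₐ[F] E F)
    (h : ψ (e F 1) = -e F 1 ∧
      ∀ n : ℕ, 1 < n → ψ (e F n) = -e F n + (2 : F) • (e F 1 * e F n)) :
    ∀ m, ψ (ι F m) = fmap F m := by
  have key : ψ.toLinearMap.comp (ι F) = fmap F := by
    apply Finsupp.lhom_ext'
    rintro ⟨n, hn⟩
    apply LinearMap.ext_ring
    simp only [LinearMap.comp_apply, Finsupp.lsingle_apply, AlgHom.toLinearMap_apply]
    rw [fmap_apply, ← e_eq F n hn]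
    rcases eq_or_lt_of_le hn with h1 | h1
    · rw [← h1, h.1, e1_sq]
      simp
    · exact h.2 n h1
  intro m
  exact LinearMap.congr_fun key m

lemma comp_eq_id (ψ : E F →ₐ[F] E F)
    (h : ψ (e F 1) = -e F 1 ∧
      ∀ n : ℕ, 1 < n → ψ (e F n) = -e F n + (2 : F) • (e F 1 * e F n)) :
    ψ.comp ψ = AlgHom.id F (E F) := by
  have hι := eq_fmap F ψ h
  apply ExteriorAlgebra.hom_ext
  apply LinearMap.ext
  intro m
  simp only [LinearMap.comp_apply, AlgHom.toLinearMap_apply, AlgHom.comp_apply, AlgHom.id_apply]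
  rw [hι m, fmap_apply, map_add, map_neg, hι m, map_smul, map_mul, h.1, hι m, fmap_apply]
  set a := ι F m
  set b := e F 1
  have hbb : b * b = 0 := e1_sq F
  have h0 : b * (b * a) = 0 := by rw [← mul_assoc, hbb, zero_mul]
  simp only [mul_add, mul_neg, neg_mul, neg_neg, mul_smul_comm, smul_neg, h0, smul_zero, neg_zero, add_zero, neg_add_rev]
  module

end Aux

/-- there is a unique `F`-algebra homomorphism `φ : E → E` with
`φ (e 1) = -e 1` and `φ (e n) = -e n + 2 • e 1 * e n` for all `n > 1`; moreover any such
`φ` satisfies `φ ∘ φ = id`, so `φ` is an `F`-algebra automorphism of order two. -/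
theorem stmt11 (F : Type) [Field F] (hchar : (2 : F) ≠ 0) :
    (∃! φ : E F →ₐ[F] E F,
        φ (e F 1) = -e F 1 ∧
        ∀ n : ℕ, 1 < n → φ (e F n) = -e F n + (2 : F) • (e F 1 * e F n)) ∧
    (∀ φ : E F →ₐ[F] E F,
        (φ (e F 1) = -e F 1 ∧
          ∀ n : ℕ, 1 < n → φ (e F n) = -e F n + (2 : F) • (e F 1 * e F n)) →
        φ.comp φ = AlgHom.id F (E F)) := by
  refine ⟨⟨phi F, sat_phi F, ?_⟩, fun ψ h => comp_eq_id F ψ h⟩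
  intro ψ h
  apply ExteriorAlgebra.hom_ext
  apply LinearMap.ext
  intro m
  simp only [LinearMap.comp_apply, AlgHom.toLinearMap_apply]
  rw [eq_fmap F ψ h m, phi_ι]
end

section
/- Let φ : E → E be the F-algebra automorphism determined by φ(e₁) = −e₁ and φ(e_n) = −e_n + 2·e₁·e_n for n > 1. Then the fixed subalgebra {x ∈ E : φ(x) = x} (the even component E_{0,φ} of the ℤ₂-grading on E induced by φ) equals the center Z(E) of E. -/
section RingHelpers

variable {A : Type*} [Ring A]

lemma hlp_one₁ (u : A) (h : u * u = 0) : (1 + u) * (1 - u) = 1 := by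
  have : (1 + u) * (1 - u) = 1 - u * u := by noncomm_ring
  rw [this, h, sub_zero]

lemma hlp_one₂ (u : A) (h : u * u = 0) : (1 - u) * (1 + u) = 1 := by
  have : (1 - u) * (1 + u) = 1 - u * u := by noncomm_ring
  rw [this, h, sub_zero]

lemma hlp_c (u : A) (h : u * u = 0) : (1 - u) * -u * (1 + u) = -u := by
  have a1 : (1 - u) * -u = -u + u * u := by noncomm_ring
  rw [a1, h, add_zero]
  have a2 : -u * (1 + u) = -u - u * u := by noncomm_ring
  rw [a2, h, sub_zero]

lemma hlp_addconj (u a b : A) :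
    (1 - u) * a * (1 + u) + (1 - u) * b * (1 + u) = (1 - u) * (a + b) * (1 + u) := by
  noncomm_ring

lemma hlp_d (u v : A) (h : u * u = 0) (hvu : v * u = -(u * v)) :
    (1 - u) * -v * (1 + u) = -v + (u * v + u * v) := by
  have huvu : u * v * u = 0 := by
    rw [mul_assoc, hvu, mul_neg, ← mul_assoc, h, zero_mul, neg_zero]
  have : (1 - u) * -v * (1 + u) = -v - v * u + u * v + u * v * u := by noncomm_ring
  rw [this, huvu, hvu, add_zero]
  abel

lemma hlp_e (u a b : A) (h : u * u = 0) :
    ((1 - u) * a * (1 + u)) * ((1 - u) * b * (1 + u)) = (1 - u) * (a * b) * (1 + u) := by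
  have e1 : ((1 - u) * a * (1 + u)) * ((1 - u) * b * (1 + u))
      = (1 - u) * a * ((1 + u) * (1 - u)) * b * (1 + u) := by noncomm_ring
  rw [e1, hlp_one₁ u h]
  noncomm_ring

lemma hlp_f (u x : A) (h : u * u = 0) : (1 + u) * ((1 - u) * x * (1 + u)) * (1 - u) = x := by
  have e1 : (1 + u) * ((1 - u) * x * (1 + u)) * (1 - u)
      = ((1 + u) * (1 - u)) * x * ((1 + u) * (1 - u)) := by noncomm_ring
  rw [e1, hlp_one₁ u h, one_mul, mul_one]

lemma hlp_g (u x y : A) (h : u * u = 0) (hux : u * x = y * u) :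
    (1 + u) * x * (1 - u) - x = (y - x) * u := by
  have huxu : u * x * u = 0 := by rw [hux, mul_assoc, h, mul_zero]
  have e1 : (1 + u) * x * (1 - u) = x + u * x - x * u - u * x * u := by noncomm_ring
  rw [e1, huxu, hux, sub_zero, sub_mul]
  abel

lemma hlp_der (ca cb cy sa sb b y : A) :
    ca * (b * y) + sa * (cb * y + sb * cy) = (ca * b + sa * cb) * y + sa * sb * cy := by
  noncomm_ring

lemma hlp_add (p q r s t w : A) :
    p * t + r * w + (q * t + s * w) = (p + q) * t + (r + s) * w := by
  noncomm_ring

end RingHelpers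

section Aux

variable {F : Type} [Field F]

local notation "Mdl" => ({n : ℕ // 1 ≤ n} →₀ F)

lemma aux_anticomm (a b : Mdl) :
    ExteriorAlgebra.ι F a * ExteriorAlgebra.ι F b
      = -(ExteriorAlgebra.ι F b * ExteriorAlgebra.ι F a) :=
  eq_neg_of_add_eq_zero_left (ExteriorAlgebra.ι_add_mul_swap a b)

/-- The fundamental (anti)commutation identity: `ι m * x = involute x * ι m`. -/
lemma aux_ι_mul (m : Mdl) (x : E F) :
    ExteriorAlgebra.ι F m * x = CliffordAlgebra.involute x * ExteriorAlgebra.ι F m := by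
  induction x using CliffordAlgebra.induction with
  | algebraMap r => rw [AlgHom.commutes, Algebra.commutes]
  | ι v => rw [CliffordAlgebra.involute_ι, neg_mul]; exact aux_anticomm m v
  | mul a b ha hb => rw [← mul_assoc, ha, mul_assoc, hb, ← mul_assoc, map_mul]
  | add a b ha hb => rw [mul_add, ha, hb, map_add, add_mul]

/-- Contraction is a twisted derivation. -/
lemma aux_contract_mul (d : Module.Dual F Mdl) (x : E F) : ∀ y : E F,
    CliffordAlgebra.contractLeft d (x * y) =
      CliffordAlgebra.contractLeft d x * y
        + CliffordAlgebra.involute x * CliffordAlgebra.contractLeft d y := by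
  induction x using CliffordAlgebra.induction with
  | algebraMap r =>
      intro y
      rw [CliffordAlgebra.contractLeft_algebraMap_mul, CliffordAlgebra.contractLeft_algebraMap,
        zero_mul, zero_add, AlgHom.commutes]
  | ι v =>
      intro y
      rw [CliffordAlgebra.contractLeft_ι_mul, CliffordAlgebra.contractLeft_ι,
        CliffordAlgebra.involute_ι, neg_mul, Algebra.smul_def, sub_eq_add_neg]
  | mul a b ha hb =>
      intro y
      rw [mul_assoc, ha (b * y), hb y, ha b, map_mul]
      exact hlp_der _ _ _ _ _ _ _
  | add a b ha hb =>
      intro y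
      rw [add_mul, map_add, ha y, hb y, map_add, map_add]
      exact hlp_add _ _ _ _ _ _

/-- Every element only involves finitely many coordinates, as detected by contraction. -/
lemma aux_finite (x : E F) :
    ∃ S : Finset {n : ℕ // 1 ≤ n}, ∀ i ∉ S,
      CliffordAlgebra.contractLeft (Finsupp.lapply i : Mdl →ₗ[F] F) x = 0 := by
  induction x using CliffordAlgebra.induction with
  | algebraMap r =>
      exact ⟨∅, fun i _ => CliffordAlgebra.contractLeft_algebraMap _ _ _⟩
  | ι v =>
      refine ⟨v.support, fun i hi => ?_⟩
      rw [CliffordAlgebra.contractLeft_ι]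
      simp [Finsupp.notMem_support_iff.mp hi]
  | mul a b ha hb =>
      obtain ⟨Sa, ha⟩ := ha; obtain ⟨Sb, hb⟩ := hb
      refine ⟨Sa ∪ Sb, fun i hi => ?_⟩
      rw [aux_contract_mul, ha i (fun h => hi (Finset.mem_union_left _ h)),
        hb i (fun h => hi (Finset.mem_union_right _ h)), zero_mul, mul_zero, add_zero]
  | add a b ha hb =>
      obtain ⟨Sa, ha⟩ := ha; obtain ⟨Sb, hb⟩ := hb
      refine ⟨Sa ∪ Sb, fun i hi => ?_⟩
      rw [map_add, ha i (fun h => hi (Finset.mem_union_left _ h)),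
        hb i (fun h => hi (Finset.mem_union_right _ h)), add_zero]

instance : Infinite {n : ℕ // 1 ≤ n} :=
  Infinite.of_injective (fun k : ℕ => (⟨k + 1, Nat.succ_le_succ (Nat.zero_le k)⟩ : {n : ℕ // 1 ≤ n}))
    (fun a b h => by simpa using congrArg Subtype.val h)

/-- If `y * ι m = 0` for all `m`, then `y = 0` (uses a fresh generator). -/
lemma aux_kill (y : E F) (h : ∀ m : Mdl, y * ExteriorAlgebra.ι F m = 0) : y = 0 := by
  obtain ⟨S, hS⟩ := aux_finite y
  obtain ⟨i, hi⟩ := Infinite.exists_notMem_finset S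
  have h0 := aux_contract_mul (Finsupp.lapply i : Mdl →ₗ[F] F) y
    (ExteriorAlgebra.ι F (Finsupp.single i 1))
  rw [h (Finsupp.single i 1), map_zero, hS i hi, zero_mul, zero_add,
    CliffordAlgebra.contractLeft_ι] at h0
  simp only [Finsupp.lapply_apply, Finsupp.single_eq_same, map_one, mul_one] at h0
  have h1 := congrArg CliffordAlgebra.involute h0.symm
  rwa [CliffordAlgebra.involute_involute, map_zero] at h1

lemma aux_central_involute (x : E F) (hc : ∀ b : E F, b * x = x * b) :
    CliffordAlgebra.involute x = x := by
  have hk : ∀ m : Mdl, (CliffordAlgebra.involute x - x) * ExteriorAlgebra.ι F m = 0 := by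
    intro m
    rw [sub_mul, ← aux_ι_mul, hc, sub_self]
  exact sub_eq_zero.mp (aux_kill _ hk)

lemma aux_involute_central (x : E F) (h : CliffordAlgebra.involute x = x) :
    ∀ b : E F, b * x = x * b := by
  intro b
  induction b using CliffordAlgebra.induction with
  | algebraMap r => rw [← Algebra.commutes]
  | ι m => rw [aux_ι_mul, h]
  | mul a b ha hb => rw [mul_assoc, hb, ← mul_assoc, ha, mul_assoc]
  | add a b ha hb => rw [add_mul, ha, hb, mul_add]

end Aux

set_option maxHeartbeats 1000000 in
/-- if `φ` is the `F`-algebra automorphism of `E` determined by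
`φ (e 1) = -e 1` and `φ (e n) = -e n + 2 • e 1 * e n` for `n > 1`, then the fixed
subalgebra `{x : E | φ x = x}` (the even component `E₀` of the induced `ℤ₂`-grading)
equals the center `Z(E)` of `E`. -/
theorem stmt12 (F : Type) [Field F] (hchar : (2 : F) ≠ 0)
    (φ : E F →ₐ[F] E F)
    (h1 : φ (e F 1) = -e F 1)
    (h2 : ∀ n : ℕ, 1 < n → φ (e F n) = -e F n + (2 : F) • (e F 1 * e F n)) :
    {x : E F | φ x = x} = (Subalgebra.center F (E F) : Set (E F)) := by
  set u : E F := e F 1 with hu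
  have hu1 : u = ExteriorAlgebra.ι F (Finsupp.single ⟨1, le_refl 1⟩ (1 : F)) := by
    rw [hu]; simp only [e, dif_pos (le_refl 1)]
  have huu : u * u = 0 := by rw [hu1]; exact ExteriorAlgebra.ι_sq_zero _
  -- the single-generator cases of the key formula
  have hsingle : ∀ i : {n : ℕ // 1 ≤ n},
      φ (ExteriorAlgebra.ι F (Finsupp.single i (1 : F)))
        = (1 - u) * CliffordAlgebra.involute (ExteriorAlgebra.ι F (Finsupp.single i (1 : F)))
            * (1 + u) := by
    intro i
    rw [CliffordAlgebra.involute_ι]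
    rcases eq_or_lt_of_le i.2 with hi | hi
    · have hieq : i = ⟨1, le_refl 1⟩ := Subtype.ext hi.symm
      rw [hieq, ← hu1, h1, hlp_c u huu]
    · set v : E F := ExteriorAlgebra.ι F (Finsupp.single i (1 : F)) with hv
      have hev : e F i.1 = v := by simp only [e, dif_pos i.2, hv]
      have h2' : φ v = -v + (2 : F) • (u * v) := by rw [← hev]; exact h2 i.1 hi
      have hvu : v * u = -(u * v) := by rw [hu1, hv]; exact aux_anticomm _ _
      rw [h2', hlp_d u v huu hvu, two_smul]
  -- the key formula: φ x = (1 - u) * involute x * (1 + u)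
  have key : ∀ x : E F, φ x = (1 - u) * CliffordAlgebra.involute x * (1 + u) := by
    intro x
    induction x using CliffordAlgebra.induction with
    | algebraMap r =>
        rw [AlgHom.commutes, AlgHom.commutes, ← Algebra.commutes, mul_assoc,
          hlp_one₂ u huu, mul_one]
    | ι m =>
        induction m using Finsupp.induction_linear with
        | zero => simp
        | add f g hf hg =>
            simp only [map_add]
            rw [hf, hg]
            exact hlp_addconj _ _ _
        | single a b =>
            rw [← Finsupp.smul_single_one a b]
            simp only [map_smul]
            rw [mul_smul_comm, smul_mul_assoc, hsingle a]
    | mul a b ha hb => rw [map_mul, ha, hb, hlp_e u _ _ huu, map_mul]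
    | add a b ha hb =>
        simp only [map_add]
        rw [ha, hb]
        exact hlp_addconj _ _ _
  ext x
  simp only [Set.mem_setOf_eq, SetLike.mem_coe]
  constructor
  · intro hx
    have hform : (1 - u) * CliffordAlgebra.involute x * (1 + u) = x := by rw [← key, hx]
    have hσ : CliffordAlgebra.involute x = (1 + u) * x * (1 - u) := by
      have hcg := congrArg (fun z => (1 + u) * z * (1 - u)) hform
      rw [hlp_f u _ huu] at hcg
      exact hcg
    have hux : u * x = CliffordAlgebra.involute x * u := by
      rw [hu1]; exact aux_ι_mul _ x
    have ht : CliffordAlgebra.involute x - x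
        = (CliffordAlgebra.involute x - x) * u := by
      have := hlp_g u x (CliffordAlgebra.involute x) huu hux
      rw [← hσ] at this
      exact this
    have ht0 : CliffordAlgebra.involute x - x = 0 := by
      have h8 : (CliffordAlgebra.involute x - x) * u
          = (CliffordAlgebra.involute x - x) * u * u := congrArg (· * u) ht
      have h9 : CliffordAlgebra.involute x - x
          = (CliffordAlgebra.involute x - x) * (u * u) := by
        rw [← mul_assoc, ← h8, ← ht]
      rwa [huu, mul_zero] at h9
    exact Subalgebra.mem_center_iff.mpr (aux_involute_central x (sub_eq_zero.mp ht0))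
  · intro hx
    have hc : ∀ b : E F, b * x = x * b := Subalgebra.mem_center_iff.mp hx
    rw [key x, aux_central_involute x hc, hc (1 - u), mul_assoc, hlp_one₂ u huu, mul_one]
end

section
/- Let φ : E → E be the F-algebra automorphism of order two determined by φ(e_i) = ε_i·e_i + w_i for all i ≥ 1 (Method C). Then there exist an F-algebra automorphism ψ of E with ψ∘ψ = id and ψ(e_i) ∈ {e_i, −e_i} for every i (a homogeneous involution, i.e. an automorphism of type 1), and an F-algebra automorphism θ of E, such that θ∘φ = ψ∘θ; in particular E_φ and E_ψ are isomorphic superalgebras. -/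
open ExteriorAlgebra

noncomputable section
variable (F : Type) [Field F]

abbrev M := {n : ℕ // 1 ≤ n} →₀ F

/-- total version of the generators -/
def vec (i : ℕ) : M F := if h : 1 ≤ i then Finsupp.single ⟨i, h⟩ 1 else 0

lemma e_eq_s15 (i : ℕ) : e F i = ι F (vec F i) := by
  unfold e vec; split <;> simp

lemma ι_single (i : {n : ℕ // 1 ≤ n}) : ι F (Finsupp.single i 1) = e F i.val := by
  rw [e_eq_s15]; unfold vec; rw [dif_pos i.prop]

lemma vec_single (i : {n : ℕ // 1 ≤ n}) : vec F i.val = Finsupp.single i 1 := by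
  unfold vec; rw [dif_pos i.prop]

/-- duplicate index ⇒ product of generators is zero -/
lemma prod_map_e_eq_zero {l : List ℕ} (h : ¬ l.Nodup) : (l.map (e F)).prod = 0 := by
  rw [List.nodup_iff_injective_get] at h
  simp only [Function.Injective, not_forall] at h
  obtain ⟨i, j, hij, hne⟩ := h
  have hl : l.map (e F) = List.ofFn fun k : Fin l.length => ι F (vec F (l.get k)) := by
    conv_lhs => rw [← List.ofFn_get l, List.map_ofFn]
    simp [Function.comp_def, e_eq_s15]
  rw [hl, ← ιMulti_apply]
  exact (ιMulti F l.length).map_eq_zero_of_eq _ (by rw [hij]) hne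

lemma prod_mul_prod_zero {l₁ l₂ : List ℕ} {a : ℕ} (h₁ : a ∈ l₁) (h₂ : a ∈ l₂) :
    (l₁.map (e F)).prod * (l₂.map (e F)).prod = 0 := by
  rw [← List.prod_append, ← List.map_append]
  apply prod_map_e_eq_zero
  intro h
  rw [List.nodup_append] at h
  exact h.2.2 _ h₁ _ h₂ rfl

lemma e_mul_prod_comm (x : M F) (l : List ℕ) :
    ι F x * (l.map (e F)).prod = (-1 : F) ^ l.length • ((l.map (e F)).prod * ι F x) := by
  induction l with
  | nil => simp
  | cons a t ih =>
    have swap : ι F x * e F a = -(e F a * ι F x) := by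
      rw [e_eq_s15]
      exact eq_neg_of_add_eq_zero_left (ι_add_mul_swap _ _)
    calc ι F x * (e F a * (t.map (e F)).prod)
        = (ι F x * e F a) * (t.map (e F)).prod := by rw [mul_assoc]
      _ = -(e F a * (ι F x * (t.map (e F)).prod)) := by rw [swap]; simp [mul_assoc]
      _ = -(e F a * ((-1 : F) ^ t.length • ((t.map (e F)).prod * ι F x))) := by rw [ih]
      _ = (-1 : F) ^ (t.length + 1) • (e F a * (t.map (e F)).prod * ι F x) := by
          rw [mul_smul_comm, pow_succ, ← neg_smul]
          ring_nf
          rw [mul_assoc]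

lemma e_w_anticomm (i j : ℕ) : e F i * w F j + w F j * e F i = 0 := by
  rw [e_eq_s15, w, e_mul_prod_comm, List.length_range',
    Odd.neg_one_pow ⟨j, by ring⟩, neg_smul, one_smul, neg_add_cancel]

lemma mem_range'_one {a m : ℕ} : a ∈ List.range' 1 m ↔ 1 ≤ a ∧ a ≤ m := by
  rw [List.mem_range'_1]; omega

lemma w_mul_w (i j : ℕ) : w F i * w F j = 0 := by
  unfold w
  exact prod_mul_prod_zero F (a := 1) (mem_range'_one.mpr (by omega))
    (mem_range'_one.mpr (by omega))

lemma prod_range'_mul_w (m j : ℕ) (hm : 1 ≤ m) :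
    ((List.range' 1 m).map (e F)).prod * w F j = 0 := by
  unfold w
  exact prod_mul_prod_zero F (a := 1) (mem_range'_one.mpr (by omega))
    (mem_range'_one.mpr (by omega))

lemma e_mul_w₀ {i j : ℕ} (h1 : 1 ≤ i) (h : i ≤ 2 * j + 1) : e F i * w F j = 0 := by
  have he : e F i = ([i].map (e F)).prod := by simp
  rw [he, w]
  exact prod_mul_prod_zero F (a := i) (by simp) (mem_range'_one.mpr ⟨h1, h⟩)

lemma w_mul_e₀ {i j : ℕ} (h1 : 1 ≤ i) (h : i ≤ 2 * j + 1) : w F j * e F i = 0 := by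
  have := e_w_anticomm F i j
  rwa [e_mul_w₀ F h1 h, zero_add] at this

lemma prod_lin (a b : ℕ → F) (m : ℕ) (hm : 2 ≤ m) :
    ((List.range' 1 m).map (fun k => a k • e F k + b k • w F k)).prod
      = (((List.range' 1 m).map a).prod) • ((List.range' 1 m).map (e F)).prod := by
  induction m, hm using Nat.le_induction with
  | base =>
    have h2 : List.range' 1 2 = [1, 2] := rfl
    rw [h2]
    simp only [List.map_cons, List.map_nil, List.prod_cons, List.prod_nil, mul_one]
    have z1 : e F 1 * w F 2 = 0 := e_mul_w₀ F (by norm_num) (by norm_num)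
    have z2 : w F 1 * e F 2 = 0 := w_mul_e₀ F (by norm_num) (by norm_num)
    have z3 : w F 1 * w F 2 = 0 := w_mul_w F 1 2
    simp [add_mul, mul_add, smul_mul_smul_comm, z1, z2, z3, smul_smul, mul_comm]
  | succ m hm ih =>
    rw [List.range'_1_concat]
    simp only [List.map_append, List.prod_append, List.map_cons, List.map_nil,
      List.prod_cons, List.prod_nil, mul_one]
    rw [ih, smul_mul_assoc, mul_add]
    rw [mul_smul_comm, mul_smul_comm, prod_range'_mul_w F m (1 + m) (by omega), smul_zero,
      add_zero, smul_smul, mul_comm (((List.range' 1 m).map a).prod) (a (1 + m)),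
      ← smul_smul]

lemma map_range'_e (s m : ℕ) :
    (List.range' s m).map (e F) = List.ofFn (fun j : Fin m => ι F (vec F (s + j))) := by
  induction m generalizing s with
  | zero => simp
  | succ n ih =>
    rw [List.range'_succ, List.map_cons, ih (s + 1), List.ofFn_succ]
    congr 1
    · simp [e_eq_s15]
    · congr 1
      funext j
      have h : s + 1 + (j : ℕ) = s + ((j.succ : Fin (n+1)) : ℕ) := by
        simp [Fin.val_succ]; omega
      rw [h]

lemma w_eq_ιMulti (n : ℕ) :
    w F n = ιMulti F (2 * n + 1) (fun j : Fin (2 * n + 1) => vec F (1 + j)) := by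
  rw [w, map_range'_e, ιMulti_apply]

lemma w_ne_zero (n : ℕ) : w F n ≠ 0 := by
  set N := 2 * n + 1 with hN
  set proj : M F →ₗ[F] (Fin N → F) :=
    LinearMap.pi (fun j : Fin N => Finsupp.lapply ⟨1 + j, by omega⟩) with hproj
  set alt : (M F) [⋀^Fin N]→ₗ[F] F :=
    ((Pi.basisFun F (Fin N)).det).compLinearMap proj with halt
  set fam : ∀ k : ℕ, (M F) [⋀^Fin k]→ₗ[F] F :=
    Function.update (fun k => (0 : (M F) [⋀^Fin k]→ₗ[F] F)) N alt with hfam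
  intro h0
  have h1 : liftAlternating fam (w F n) = 1 := by
    rw [w_eq_ιMulti, liftAlternating_apply_ιMulti]
    have hfamN : fam N = alt := by rw [hfam]; simp
    rw [hfamN, halt, AlternatingMap.compLinearMap_apply]
    have hv : (fun j : Fin N => proj (vec F (1 + j))) = ⇑(Pi.basisFun F (Fin N)) := by
      funext j
      funext k
      rw [hproj]
      simp only [LinearMap.pi_apply, Finsupp.lapply_apply]
      rw [vec, dif_pos (by omega : 1 ≤ 1 + (j : ℕ))]
      rw [Pi.basisFun_apply]
      rw [Finsupp.single_apply]
      by_cases hjk : j = k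
      · subst hjk; simp
      · rw [if_neg (by simp; omega), Pi.single_apply, if_neg (Ne.symm hjk)]
    rw [hv, Module.Basis.det_self]
  rw [h0, map_zero] at h1
  exact zero_ne_one h1

end


noncomputable section
variable (F : Type) [Field F]

def epsF (i : ℕ) : F := ((eps i : ℤ) : F)

lemma epsF_mul_self (i : ℕ) : epsF F i * epsF F i = 1 := by
  unfold epsF eps; split <;> norm_num

lemma epsF_cases (i : ℕ) : epsF F i = 1 ∨ epsF F i = -1 := by
  unfold epsF eps; split <;> norm_num

def gmap (c : ℕ → F) : M F →ₗ[F] E F :=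
  Finsupp.linearCombination F (fun i : {n : ℕ // 1 ≤ n} => c i.val • w F i.val)

lemma gmap_single (c : ℕ → F) (i : {n : ℕ // 1 ≤ n}) :
    gmap F c (Finsupp.single i 1) = c i.val • w F i.val := by
  simp [gmap]

open ExteriorAlgebra

lemma fθ_pair (c : ℕ → F) (x y : M F) :
    (ι F x + gmap F c x) * (ι F y + gmap F c y)
      + (ι F y + gmap F c y) * (ι F x + gmap F c x) = 0 := by
  set f : M F →ₗ[F] E F := (ι F : M F →ₗ[F] E F) + gmap F c with hf
  set Φ : M F →ₗ[F] M F →ₗ[F] E F :=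
    ((LinearMap.mul F (E F)).compl₁₂ f f) + ((LinearMap.mul F (E F)).compl₁₂ f f).flip with hΦ
  have key : Φ = 0 := by
    apply Finsupp.basisSingleOne.ext; intro i
    apply Finsupp.basisSingleOne.ext; intro j
    simp only [Finsupp.coe_basisSingleOne, LinearMap.zero_apply, hΦ, LinearMap.add_apply,
      LinearMap.compl₁₂_apply, LinearMap.flip_apply, LinearMap.mul_apply', hf,
      ι_single, gmap_single]
    have hee : e F j.val * e F i.val = -(e F i.val * e F j.val) :=
      eq_neg_of_add_eq_zero_right (by
        rw [e_eq_s15, e_eq_s15]; exact ι_add_mul_swap _ _)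
    have hwe : w F j.val * e F i.val = -(e F i.val * w F j.val) :=
      eq_neg_of_add_eq_zero_right (e_w_anticomm F i.val j.val)
    have hew : w F i.val * e F j.val = -(e F j.val * w F i.val) :=
      eq_neg_of_add_eq_zero_right (e_w_anticomm F j.val i.val)
    have hww1 : w F i.val * w F j.val = 0 := w_mul_w F _ _
    have hww2 : w F j.val * w F i.val = 0 := w_mul_w F _ _
    simp only [add_mul, mul_add, smul_mul_assoc, mul_smul_comm, hee, hwe, hew, hww1, hww2,
      smul_zero, smul_neg, mul_neg, add_zero, zero_add]
    abel
  have h := DFunLike.congr_fun (DFunLike.congr_fun key x) y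
  simp only [hΦ, hf, LinearMap.add_apply, LinearMap.compl₁₂_apply, LinearMap.flip_apply,
    LinearMap.mul_apply', LinearMap.zero_apply] at h
  exact h

lemma fθ_cond (hchar : (2 : F) ≠ 0) (c : ℕ → F) (m : M F) :
    ((ι F : M F →ₗ[F] E F) + gmap F c) m * (((ι F : M F →ₗ[F] E F) + gmap F c) m) = 0 := by
  have h := fθ_pair F c m m
  simp only [LinearMap.add_apply] at *
  have h2 : (2 : F) • ((ι F m + gmap F c m) * (ι F m + gmap F c m)) = 0 := by
    rw [two_smul]; convert h using 2
  rcases smul_eq_zero.mp h2 with h | h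
  · exact absurd h hchar
  · exact h

def Θ (hchar : (2 : F) ≠ 0) (c : ℕ → F) : E F →ₐ[F] E F :=
  lift F ⟨(ι F : M F →ₗ[F] E F) + gmap F c, fθ_cond F hchar c⟩

lemma Θ_e (hchar : (2 : F) ≠ 0) (c : ℕ → F) {i : ℕ} (hi : 1 ≤ i) :
    Θ F hchar c (e F i) = e F i + c i • w F i := by
  rw [e_eq_s15, Θ, lift_ι_apply, LinearMap.add_apply, ← e_eq_s15]
  congr 1
  rw [vec, dif_pos hi]
  exact gmap_single F c ⟨i, hi⟩

lemma hom_w (Ξ : E F →ₐ[F] E F) (a b : ℕ → F)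
    (h : ∀ k, 1 ≤ k → Ξ (e F k) = a k • e F k + b k • w F k) {i : ℕ} (hi : 1 ≤ i) :
    Ξ (w F i) = (((List.range' 1 (2 * i + 1)).map a).prod) • w F i := by
  rw [w, map_list_prod, List.map_map]
  rw [List.map_congr_left
    (fun k hk => show (⇑Ξ ∘ e F) k = a k • e F k + b k • w F k from h k (mem_range'_one.mp hk).1)]
  rw [prod_lin F a b (2 * i + 1) (by omega)]

lemma Θ_w (hchar : (2 : F) ≠ 0) (c : ℕ → F) {i : ℕ} (hi : 1 ≤ i) :
    Θ F hchar c (w F i) = w F i := by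
  rw [hom_w F _ (fun _ => (1 : F)) c
    (fun k hk => by rw [Θ_e F hchar c hk, one_smul]) hi]
  simp

/-- the diagonal linear map with signs `epsF` -/
def σmap : M F →ₗ[F] M F :=
  Finsupp.linearCombination F (fun i : {n : ℕ // 1 ≤ n} => epsF F i.val • Finsupp.single i 1)

def ψhom : E F →ₐ[F] E F :=
  lift F ⟨(ι F : M F →ₗ[F] E F) ∘ₗ σmap F, fun m => by
    simp only [LinearMap.comp_apply]
    exact ι_sq_zero _⟩

lemma ψ_e {i : ℕ} (hi : 1 ≤ i) : ψhom F (e F i) = epsF F i • e F i := by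
  rw [e_eq_s15, ψhom, lift_ι_apply, LinearMap.comp_apply, vec, dif_pos hi, σmap,
    Finsupp.linearCombination_single, one_smul, map_smul, ι_single]

lemma ψ_w {i : ℕ} (hi : 1 ≤ i) :
    ψhom F (w F i) = (((List.range' 1 (2 * i + 1)).map (epsF F)).prod) • w F i :=
  hom_w F _ (epsF F) (fun _ => (0 : F))
    (fun k hk => by rw [ψ_e F hk, zero_smul, add_zero]) hi

lemma ψ_comp_ψ : (ψhom F).comp (ψhom F) = AlgHom.id F (E F) := by
  apply ExteriorAlgebra.hom_ext
  apply Finsupp.basisSingleOne.ext; intro i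
  simp only [Finsupp.coe_basisSingleOne, LinearMap.comp_apply, AlgHom.toLinearMap_apply,
    AlgHom.comp_apply, AlgHom.id_apply, ι_single]
  rw [ψ_e F i.prop, map_smul, ψ_e F i.prop, smul_smul, epsF_mul_self, one_smul]

lemma Θ_comp_Θ (hchar : (2 : F) ≠ 0) (c c' : ℕ → F) (hcc : ∀ k, c k + c' k = 0) :
    (Θ F hchar c).comp (Θ F hchar c') = AlgHom.id F (E F) := by
  apply ExteriorAlgebra.hom_ext
  apply Finsupp.basisSingleOne.ext; intro i
  simp only [Finsupp.coe_basisSingleOne, LinearMap.comp_apply, AlgHom.toLinearMap_apply,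
    AlgHom.comp_apply, AlgHom.id_apply, ι_single]
  rw [Θ_e F hchar c' i.prop, map_add, map_smul, Θ_e F hchar c i.prop,
    Θ_w F hchar c i.prop, add_assoc, ← add_smul, hcc, zero_smul, add_zero]

/-- let `φ` be the Method C automorphism of order two, determined by
`φ (e i) = ε i • e i + w i` for all `i ≥ 1`. Then there exist a homogeneous involution
`ψ` (an automorphism of type 1, i.e. `ψ ∘ ψ = id` with `ψ (e i) = ±e i` for all `i ≥ 1`)
and an `F`-algebra automorphism `θ` of `E` with `θ ∘ φ = ψ ∘ θ`; in particular `E_φ` and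
`E_ψ` are isomorphic superalgebras. -/
theorem stmt15 (F : Type) [Field F] (hchar : (2 : F) ≠ 0)
    (φ : E F →ₐ[F] E F)
    (hφ : ∀ i : ℕ, 1 ≤ i → φ (e F i) = eps i • e F i + w F i)
    (hinv : φ.comp φ = AlgHom.id F (E F)) :
    ∃ ψ : E F →ₐ[F] E F,
      ψ.comp ψ = AlgHom.id F (E F) ∧
      (∀ i : ℕ, 1 ≤ i → ψ (e F i) = e F i ∨ ψ (e F i) = -e F i) ∧
      ∃ θ : E F ≃ₐ[F] E F, ∀ x : E F, θ (φ x) = ψ (θ x) := by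
  have hφ' : ∀ i : ℕ, 1 ≤ i → φ (e F i) = epsF F i • e F i + w F i := by
    intro i hi
    rw [hφ i hi, ← Int.cast_smul_eq_zsmul F]
    rfl
  -- the sign of `φ` on `w i`
  set S : ℕ → F := fun i => ((List.range' 1 (2 * i + 1)).map (epsF F)).prod with hSdef
  have hφw : ∀ i : ℕ, 1 ≤ i → φ (w F i) = S i • w F i := by
    intro i hi
    exact hom_w F φ (epsF F) (fun _ => (1 : F))
      (fun k hk => by rw [hφ' k hk, one_smul]) hi
  have hS : ∀ i : ℕ, 1 ≤ i → S i = -(epsF F i) := by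
    intro i hi
    have h := DFunLike.congr_fun hinv (e F i)
    rw [AlgHom.comp_apply, AlgHom.id_apply, hφ' i hi, map_add, map_smul, hφ' i hi,
      hφw i hi, smul_add, smul_smul, epsF_mul_self, one_smul, add_assoc, ← add_smul] at h
    have h2 : (epsF F i + S i) • w F i = 0 := by
      have := congrArg (fun z => z - e F i) h
      simpa using this
    rcases smul_eq_zero.mp h2 with h3 | h3
    · linear_combination h3
    · exact absurd h3 (w_ne_zero F i)
  -- conjugating automorphism coefficients
  set c : ℕ → F := fun k => -(epsF F k) / 2 with hc
  set c' : ℕ → F := fun k => epsF F k / 2 with hc'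
  have hcc : ∀ k, c k + c' k = 0 := fun k => by rw [hc, hc']; ring
  have hcc' : ∀ k, c' k + c k = 0 := fun k => by rw [hc, hc']; ring
  set Θp := Θ F hchar c with hΘp
  set Θm := Θ F hchar c' with hΘm
  refine ⟨ψhom F, ψ_comp_ψ F, ?_, ?_⟩
  · intro i hi
    rcases epsF_cases F i with h | h
    · left; rw [ψ_e F hi, h, one_smul]
    · right; rw [ψ_e F hi, h, neg_smul, one_smul]
  · refine ⟨AlgEquiv.ofAlgHom Θp Θm (Θ_comp_Θ F hchar c c' hcc) (Θ_comp_Θ F hchar c' c hcc'), ?_⟩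
    have hcomm : Θp.comp φ = (ψhom F).comp Θp := by
      apply ExteriorAlgebra.hom_ext
      apply Finsupp.basisSingleOne.ext; intro i
      simp only [Finsupp.coe_basisSingleOne, LinearMap.comp_apply, AlgHom.toLinearMap_apply,
        AlgHom.comp_apply, ι_single]
      rw [hφ' i.val i.prop, map_add, map_smul, hΘp, Θ_e F hchar c i.prop, Θ_w F hchar c i.prop,
        map_add, map_smul, ψ_e F i.prop,
        show ψhom F (w F i.val) = S i.val • w F i.val from ψ_w F i.prop,
        hS i.val i.prop, smul_add, smul_smul, smul_smul, add_assoc]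
      have hsq := epsF_mul_self F i.val
      have hscal : epsF F i.val * c i.val + 1 = c i.val * -(epsF F i.val) := by
        have h2c : (2 : F) * c i.val = -(epsF F i.val) := by
          simp only [hc]; field_simp
        linear_combination epsF F i.val * h2c - hsq
      congr 1
      rw [← hscal, add_smul, one_smul]
    intro x
    have h := DFunLike.congr_fun hcomm x
    rw [AlgHom.comp_apply, AlgHom.comp_apply] at h
    exact h

end
end
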